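/- Let 1<p,q<∞, p' = p/(p-1), and let w be a weight on ℝ. Define the middle-point constant [w]_{Ã_{p,q}^{+,*}} = sup over all a<c, with b = (a+c)/2, of ((1/(c-a))·‖w^q·χ_{(a,b)}‖_{L^{1,∞}})^{1/q} · ((1/(c-a))∫_b^c w^{-p'})^{1/p'}. Then [w]_{Ã_{p,q}^{+,*}} ≤ [w]_{A_{p,q}^{+,*}} ≤ 2^{1/p' + 1/q} · [w]_{Ã_{p,q}^{+,*}}. -/
import Mathlib


open MeasureTheory Set ENNReal

/-- The weak `L^1` quasinorm `sup_{t>0} t |{x : |f(x)| > t}|` of a real function. -/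
noncomputable def weakL1 (f : ℝ → ℝ) : ℝ≥0∞ :=
  ⨆ (t : ℝ) (_ : 0 < t), ENNReal.ofReal t * volume {x : ℝ | t < |f x|}

/-- `[w]_{A_{p,q}^{+,*}} = sup_{a<b<c} ((1/(c-a)) ‖w^q χ_{(a,b)}‖_{L^{1,∞}})^{1/q}
((1/(c-a)) ∫_b^c w^{-p'})^{1/p'}` where `p' = p/(p-1)`. -/
noncomputable def ApqStarPlusConst (p q : ℝ) (w : ℝ → ℝ) : ℝ≥0∞ :=
  ⨆ (a : ℝ) (b : ℝ) (c : ℝ) (_ : a < b) (_ : b < c),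
    (ENNReal.ofReal (1 / (c - a)) *
        weakL1 (Set.indicator (Set.Ioo a b) (fun x => w x ^ q))) ^ (1 / q) *
      (ENNReal.ofReal (1 / (c - a)) *
        ∫⁻ y in Set.Ioo b c, ENNReal.ofReal (w y ^ (-(p / (p - 1))))) ^ ((p - 1) / p)

/-- The middle-point variant `[w]_{Ã_{p,q}^{+,*}}`, where only `b = (a+c)/2` is allowed. -/
noncomputable def ApqStarPlusMidConst (p q : ℝ) (w : ℝ → ℝ) : ℝ≥0∞ :=
  ⨆ (a : ℝ) (c : ℝ) (_ : a < c),
    (ENNReal.ofReal (1 / (c - a)) *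
        weakL1 (Set.indicator (Set.Ioo a ((a + c) / 2)) (fun x => w x ^ q))) ^ (1 / q) *
      (ENNReal.ofReal (1 / (c - a)) *
        ∫⁻ y in Set.Ioo ((a + c) / 2) c,
          ENNReal.ofReal (w y ^ (-(p / (p - 1))))) ^ ((p - 1) / p)

lemma weakL1_mono {f g : ℝ → ℝ} (h : ∀ x, |f x| ≤ |g x|) : weakL1 f ≤ weakL1 g := by
  refine iSup_mono fun t => iSup_mono fun _ => ?_
  exact mul_le_mul_right (measure_mono fun x hx => lt_of_lt_of_le hx (h x)) _

theorem stmt14 (p q : ℝ) (hp : 1 < p) (hq : 1 < q) (w : ℝ → ℝ) (hw : ∀ x, 0 ≤ w x)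
    (hwloc : LocallyIntegrable w) :
    ApqStarPlusMidConst p q w ≤ ApqStarPlusConst p q w ∧
      ApqStarPlusConst p q w ≤
        ENNReal.ofReal (2 ^ ((p - 1) / p + 1 / q)) * ApqStarPlusMidConst p q w := by
  have hr1 : (0:ℝ) ≤ 1 / q := by positivity
  have hr2 : (0:ℝ) ≤ (p - 1) / p := by
    apply div_nonneg <;> linarith
  constructor
  · refine iSup_le fun a => iSup_le fun c => iSup_le fun hac => ?_
    have h1 : a < (a + c) / 2 := by linarith
    have h2 : (a + c) / 2 < c := by linarith
    refine le_iSup_of_le a <| le_iSup_of_le ((a + c) / 2) <| le_iSup_of_le c ?_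
    rw [iSup_pos h1, iSup_pos h2]
  · refine iSup_le fun a => iSup_le fun b => iSup_le fun c => iSup_le fun hab =>
      iSup_le fun hbc => ?_
    have key : ∀ a' c' : ℝ, a' < c' → (a' + c') / 2 = b → a' ≤ a → c ≤ c' →
        1 / (c - a) ≤ 2 * (1 / (c' - a')) →
        (ENNReal.ofReal (1 / (c - a)) *
            weakL1 (Set.indicator (Set.Ioo a b) (fun x => w x ^ q))) ^ (1 / q) *
          (ENNReal.ofReal (1 / (c - a)) *
            ∫⁻ y in Set.Ioo b c, ENNReal.ofReal (w y ^ (-(p / (p - 1))))) ^ ((p - 1) / p) ≤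
          ENNReal.ofReal (2 ^ ((p - 1) / p + 1 / q)) * ApqStarPlusMidConst p q w := by
      intro a' c' hac' hmid ha' hc' hlen
      set I' := ENNReal.ofReal (1 / (c' - a')) with hI'def
      set W' := weakL1 (Set.indicator (Set.Ioo a' b) (fun x => w x ^ q)) with hW'def
      set J' := ∫⁻ y in Set.Ioo b c', ENNReal.ofReal (w y ^ (-(p / (p - 1)))) with hJ'def
      have hI : ENNReal.ofReal (1 / (c - a)) ≤ ENNReal.ofReal 2 * I' := by
        rw [hI'def, ← ENNReal.ofReal_mul (by norm_num)]
        exact ENNReal.ofReal_le_ofReal hlen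
      have hW : weakL1 (Set.indicator (Set.Ioo a b) (fun x => w x ^ q)) ≤ W' := by
        apply weakL1_mono
        intro x
        have h0 : ∀ (s : Set ℝ), 0 ≤ Set.indicator s (fun x => w x ^ q) x :=
          fun s => Set.indicator_nonneg (fun y _ => Real.rpow_nonneg (hw y) q) x
        rw [abs_of_nonneg (h0 _), abs_of_nonneg (h0 _)]
        exact Set.indicator_le_indicator_of_subset (Set.Ioo_subset_Ioo ha' le_rfl)
          (fun y => Real.rpow_nonneg (hw y) q) x
      have hJ : (∫⁻ y in Set.Ioo b c, ENNReal.ofReal (w y ^ (-(p / (p - 1))))) ≤ J' :=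
        lintegral_mono_set (Set.Ioo_subset_Ioo le_rfl hc')
      calc (ENNReal.ofReal (1 / (c - a)) *
            weakL1 (Set.indicator (Set.Ioo a b) (fun x => w x ^ q))) ^ (1 / q) *
          (ENNReal.ofReal (1 / (c - a)) *
            ∫⁻ y in Set.Ioo b c, ENNReal.ofReal (w y ^ (-(p / (p - 1))))) ^ ((p - 1) / p)
          ≤ (ENNReal.ofReal 2 * I' * W') ^ (1 / q) *
            (ENNReal.ofReal 2 * I' * J') ^ ((p - 1) / p) :=
            mul_le_mul' (ENNReal.rpow_le_rpow (mul_le_mul' hI hW) hr1)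
              (ENNReal.rpow_le_rpow (mul_le_mul' hI hJ) hr2)
        _ = (ENNReal.ofReal 2 ^ (1 / q) * (I' * W') ^ (1 / q)) *
            (ENNReal.ofReal 2 ^ ((p - 1) / p) * (I' * J') ^ ((p - 1) / p)) := by
            rw [mul_assoc (ENNReal.ofReal 2), mul_assoc (ENNReal.ofReal 2),
              ENNReal.mul_rpow_of_nonneg _ _ hr1, ENNReal.mul_rpow_of_nonneg _ _ hr2]
        _ = ENNReal.ofReal 2 ^ ((p - 1) / p + 1 / q) *
            ((I' * W') ^ (1 / q) * (I' * J') ^ ((p - 1) / p)) := by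
            rw [mul_mul_mul_comm, ← ENNReal.rpow_add _ _ (by simp) (by simp), add_comm]
        _ ≤ ENNReal.ofReal (2 ^ ((p - 1) / p + 1 / q)) * ApqStarPlusMidConst p q w := by
            rw [ENNReal.ofReal_rpow_of_pos (by norm_num)]
            refine mul_le_mul_right ?_ _
            refine le_iSup_of_le a' <| le_iSup_of_le c' ?_
            rw [iSup_pos hac', hmid]
    rcases le_total (b - a) (c - b) with h | h
    · refine key (2 * b - c) c (by linarith) (by ring) (by linarith) le_rfl ?_
      have h1 : (0:ℝ) < c - b := by linarith
      have h2 : c - (2 * b - c) = 2 * (c - b) := by ring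
      rw [h2, show (2:ℝ) * (1 / (2 * (c - b))) = 1 / (c - b) by field_simp]
      exact one_div_le_one_div_of_le h1 (by linarith)
    · refine key a (2 * b - a) (by linarith) (by ring) le_rfl (by linarith) ?_
      have h1 : (0:ℝ) < b - a := by linarith
      have h2 : 2 * b - a - a = 2 * (b - a) := by ring
      rw [h2, show (2:ℝ) * (1 / (2 * (b - a))) = 1 / (b - a) by field_simp]
      exact one_div_le_one_div_of_le h1 (by linarith)
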